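/- arXiv:2404.02888 — 5 statements merged into one kernel-verified Lean document; each statement's English description precedes it below -/
import Mathlib

section
/- Let (η_k)_{k≥1} be the points of a rate-1 Poisson point process on (0,∞) listed in increasing order, and Z(β)=Σ_k η_k^{-β}. Then almost surely the limit lim_{β↓1} (Z(β) - ζ(β)) exists and is finite; consequently Z(β) = 1/(β-1) + W + o(1) a.s. as β↓1 for some random variable W. -/
open MeasureTheory ProbabilityTheory Real Filter Set Topology

open scoped ENNReal

/-!
Write `η_k = X_0 + ⋯ + X_k = (k + 1) + d_k`. The strong law gives `η_k ≥ (k + 1) / 2` eventually,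
and since `E[d_k²] = (k + 1) Var X_0`, the series `∑ d_k² / (k + 1)^(5/2)` has finite expectation;
by AM-GM, `∑ |d_k| / (k + 1)²` then converges almost surely. The mean value theorem bounds
`|η_k^(-β) - (k + 1)^(-β)|` by `8 |d_k| / (k + 1)²` uniformly in `β ∈ [1, 2]` for large `k`, so
dominated convergence lets `β ↓ 1` in `∑ (η_k^(-β) - (k + 1)^(-β))`. Finally
`∑ (n + 1)^(-β) = 1 / (β - 1) + γ + o(1)`.
-/

lemma measurable_gammaPDF (a r : ℝ) : Measurable (gammaPDF a r) :=
  (measurable_gammaPDFReal a r).ennreal_ofReal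

section Exponential

variable {r : ℝ}

lemma toReal_gammaPDF_one_smul_eq_indicator (hr : 0 ≤ r) (g : ℝ → ℝ) :
    (fun x => (gammaPDF 1 r x).toReal • g x) =
      (Ici 0).indicator fun x => r * exp (-(r * x)) * g x := by
  ext x
  by_cases hx : 0 ≤ x
  · simp [gammaPDF, gammaPDFReal, hx, hr, (exp_pos _).le]
  · simp [gammaPDF, gammaPDFReal, hx]

lemma integral_expMeasure (hr : 0 ≤ r) (g : ℝ → ℝ) :
    ∫ x, g x ∂expMeasure r = ∫ x in Ioi 0, r * exp (-(r * x)) * g x := by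
  rw [expMeasure, gammaMeasure, integral_withDensity_eq_integral_toReal_smul
    (measurable_gammaPDF 1 r) (ae_of_all _ fun _ => ENNReal.ofReal_lt_top),
    toReal_gammaPDF_one_smul_eq_indicator hr, integral_indicator measurableSet_Ici,
    integral_Ici_eq_integral_Ioi]

lemma integrable_expMeasure_iff (hr : 0 ≤ r) {g : ℝ → ℝ} :
    Integrable g (expMeasure r) ↔ IntegrableOn (fun x => r * exp (-(r * x)) * g x) (Ioi 0) := by
  rw [expMeasure, gammaMeasure, integrable_withDensity_iff_integrable_smul'
    (measurable_gammaPDF 1 r) (ae_of_all _ fun _ => ENNReal.ofReal_lt_top),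
    toReal_gammaPDF_one_smul_eq_indicator hr, integrable_indicator_iff measurableSet_Ici,
    integrableOn_Ici_iff_integrableOn_Ioi]

lemma integral_id_expMeasure (hr : 0 < r) : ∫ x, x ∂expMeasure r = r⁻¹ := by
  have h := integral_rpow_mul_exp_neg_mul_Ioi two_pos hr
  rw [Gamma_two, mul_one, rpow_two] at h
  rw [integral_expMeasure hr.le]
  calc ∫ x in Ioi 0, r * exp (-(r * x)) * x
      = r * ∫ x in Ioi 0, x ^ ((2 : ℝ) - 1) * exp (-(r * x)) := by
        rw [← integral_const_mul]
        refine setIntegral_congr_fun measurableSet_Ioi fun x _ => ?_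
        rw [show (2 : ℝ) - 1 = 1 by norm_num, rpow_one]
        ring
    _ = r⁻¹ := by
        rw [h]
        field_simp

lemma memLp_two_id_expMeasure (hr : 0 < r) : MemLp id 2 (expMeasure r) := by
  rw [memLp_two_iff_integrable_sq aestronglyMeasurable_id, integrable_expMeasure_iff hr.le]
  have h : IntegrableOn (fun x => r * (x ^ (2 : ℝ) * exp (-r * x ^ (1 : ℝ)))) (Ioi 0) :=
    (integrableOn_rpow_mul_exp_neg_mul_rpow (by norm_num) one_pos hr).const_mul r
  refine h.congr_fun (fun x _ => ?_) measurableSet_Ioi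
  simp only [rpow_one, rpow_two, id, neg_mul]
  ring

end Exponential

lemma tendsto_tsum_of_eventually_dominated {α G : Type*} {l : Filter α}
    [NormedAddCommGroup G] [CompleteSpace G] {f : α → ℕ → G} {g : ℕ → G} {bound : ℕ → ℝ}
    (N : ℕ) (h_sum : Summable bound) (hab : ∀ k, Tendsto (f · k) l (𝓝 (g k)))
    (h_bound : ∀ᶠ β in l, ∀ k ≥ N, ‖f β k‖ ≤ bound k) :
    Tendsto (∑' k, f · k) l (𝓝 (∑' k, g k)) := by
  -- Each of the finitely many terms below `N` converges, so is eventually bounded by `‖g k‖ + 1`.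
  refine tendsto_tsum_of_dominated_convergence
    (bound := fun k => if k < N then ‖g k‖ + 1 else bound k) ?_ hab ?_
  · refine h_sum.congr_cofinite ?_
    filter_upwards [Nat.cofinite_eq_atTop ▸ eventually_ge_atTop N] with k hk
    simp [not_lt.mpr hk]
  · have h_head : ∀ᶠ β in l, ∀ k ∈ Finset.range N, ‖f β k‖ ≤ ‖g k‖ + 1 :=
      (eventually_all_finset _).2 fun k _ =>
        (hab k).norm.eventually (eventually_le_nhds (lt_add_one _))
    filter_upwards [h_bound, h_head] with β h_tail h_head k
    split_ifs with hk
    · exact h_head k (Finset.mem_range.2 hk)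
    · exact h_tail k (not_lt.mp hk)

lemma abs_rpow_neg_sub_rpow_neg_le {m x y β : ℝ} (hm : 1 ≤ m) (hx : m ≤ x) (hy : m ≤ y)
    (hβ : β ∈ Icc 1 2) : |x ^ (-β) - y ^ (-β)| ≤ 2 * |x - y| / m ^ 2 := by
  have hm0 : 0 < m := one_pos.trans_le hm
  have hderiv : ∀ t ∈ Ici m, HasDerivWithinAt (· ^ (-β)) (-β * t ^ (-β - 1)) (Ici m) t :=
    fun t ht => (hasDerivAt_rpow_const (Or.inl (hm0.trans_le ht).ne')).hasDerivWithinAt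
  have hbound : ∀ t ∈ Ici m, ‖-β * t ^ (-β - 1)‖ ≤ 2 / m ^ 2 := by
    intro t (ht : m ≤ t)
    have ht0 : 0 < t := hm0.trans_le ht
    rw [norm_mul, norm_neg, norm_of_nonneg (by linarith [hβ.1]),
      norm_of_nonneg (rpow_nonneg ht0.le _)]
    calc β * t ^ (-β - 1) ≤ 2 * m ^ (-2 : ℝ) := by
          gcongr
          · exact hβ.2
          · calc t ^ (-β - 1) ≤ m ^ (-β - 1) :=
                  rpow_le_rpow_of_nonpos hm0 ht (by linarith [hβ.1])
              _ ≤ m ^ (-2 : ℝ) := rpow_le_rpow_of_exponent_le hm (by linarith [hβ.1])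
      _ = 2 / m ^ 2 := by rw [rpow_neg hm0.le, rpow_two, div_eq_mul_inv]
  have := (convex_Ici m).norm_image_sub_le_of_norm_hasDerivWithin_le hderiv hbound hy hx
  rw [norm_eq_abs, norm_eq_abs] at this
  exact this.trans_eq (by ring)

lemma tendsto_rpow_neg_nhdsGT_one (x : ℝ) :
    Tendsto (fun β : ℝ => x ^ (-β)) (𝓝[>] 1) (𝓝 x⁻¹) := by
  rw [← rpow_neg_one]
  exact ((continuousAt_const_rpow' (by norm_num)).tendsto.comp
    (continuous_neg.tendsto 1)).mono_left nhdsWithin_le_nhds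

lemma summable_add_one_rpow_neg {β : ℝ} (hβ : 1 < β) :
    Summable fun k : ℕ => ((k : ℝ) + 1) ^ (-β) := by
  simpa using (summable_nat_add_iff 1).mpr (summable_nat_rpow.mpr (neg_lt_neg hβ))

lemma tendsto_tsum_rpow_neg_sub_tsum_rpow_neg {a : ℕ → ℝ}
    (hlow : ∀ᶠ k : ℕ in atTop, ((k : ℝ) + 1) / 2 ≤ a k)
    (hdev : Summable fun k : ℕ => |a k - (k + 1)| / ((k : ℝ) + 1) ^ 2) :
    Tendsto (fun β : ℝ => ∑' k, a k ^ (-β) - ∑' k : ℕ, ((k : ℝ) + 1) ^ (-β)) (𝓝[>] 1)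
      (𝓝 (∑' k, ((a k)⁻¹ - ((k : ℝ) + 1)⁻¹))) := by
  obtain ⟨N, hN⟩ := (hlow.and (eventually_ge_atTop 1)).exists_forall_of_atTop
  have hbound : ∀ β ∈ Icc (1 : ℝ) 2, ∀ k ≥ N,
      ‖a k ^ (-β) - ((k : ℝ) + 1) ^ (-β)‖ ≤ 8 * (|a k - (k + 1)| / ((k : ℝ) + 1) ^ 2) := by
    intro β hβ k hk
    obtain ⟨hak, hk1⟩ := hN k hk
    have hm : (1 : ℝ) ≤ ((k : ℝ) + 1) / 2 := by
      have : (1 : ℝ) ≤ k := by exact_mod_cast hk1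
      linarith
    rw [norm_eq_abs]
    convert abs_rpow_neg_sub_rpow_neg_le (y := (k : ℝ) + 1) hm hak (by linarith) hβ using 1
    field_simp
    ring
  have hβ : ∀ᶠ β in 𝓝[>] (1 : ℝ), β ∈ Ioc 1 2 := Ioc_mem_nhdsGT one_lt_two
  refine (tendsto_tsum_of_eventually_dominated N (hdev.mul_left 8)
    (fun k => (tendsto_rpow_neg_nhdsGT_one _).sub (tendsto_rpow_neg_nhdsGT_one _))
    (hβ.mono fun β hβ => hbound β (Ioc_subset_Icc_self hβ))).congr' ?_
  filter_upwards [hβ] with β hβ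
  have hζ := summable_add_one_rpow_neg hβ.1
  have hdiff : Summable fun k => a k ^ (-β) - ((k : ℝ) + 1) ^ (-β) :=
    (hdev.mul_left 8).of_norm_bounded_eventually <|
      Nat.cofinite_eq_atTop ▸ (eventually_ge_atTop N).mono (hbound β (Ioc_subset_Icc_self hβ))
  rw [← (by simpa using hdiff.add hζ : Summable fun k => a k ^ (-β)).tsum_sub hζ]

open ZetaAsymptotics in
lemma tendsto_tsum_add_one_rpow_neg_sub_inv :
    Tendsto (fun β : ℝ => ∑' n : ℕ, ((n : ℝ) + 1) ^ (-β) - 1 / (β - 1)) (𝓝[>] 1)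
      (𝓝 eulerMascheroniConstant) := by
  have hγ : 1 - 1 * termTSum 1 = eulerMascheroniConstant := by
    rw [one_mul, termTSum, term_tsum_one.tsum_eq, sub_sub_cancel]
  have hcont : Tendsto termTSum (𝓝[>] 1) (𝓝 (termTSum 1)) :=
    (continuousOn_termTSum.continuousWithinAt self_mem_Ici).mono_left
      (nhdsWithin_mono _ Ioi_subset_Ici_self)
  refine hγ ▸ (tendsto_const_nhds.sub
    ((tendsto_id.mono_left nhdsWithin_le_nhds).mul hcont)).congr' ?_
  filter_upwards [self_mem_nhdsWithin] with β (hβ : 1 < β)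
  rw [id, ← zeta_limit_aux1 hβ]
  congr 2 with n
  rw [rpow_neg (by positivity), one_div]

lemma abs_div_sq_le_sq_div_rpow_add_rpow {d w : ℝ} (hw : 0 < w) :
    |d| / w ^ 2 ≤ d ^ 2 / w ^ (5 / 2 : ℝ) + w ^ (-(3 / 2) : ℝ) := by
  set s := w ^ (1 / 2 : ℝ)
  have hs : 0 < s := rpow_pos_of_pos hw _
  have h52 : w ^ (5 / 2 : ℝ) = w ^ 2 * s := by
    rw [← rpow_two, ← rpow_add hw]; norm_num
  have h32 : w ^ (-(3 / 2) : ℝ) = s / w ^ 2 := by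
    rw [← rpow_two, ← rpow_sub hw]; norm_num
  rw [h52, h32, div_add_div _ _ (by positivity) (by positivity),
    div_le_div_iff₀ (by positivity) (by positivity)]
  have : |d| * s ≤ d ^ 2 + s ^ 2 := by nlinarith [sq_nonneg (|d| - s), sq_abs d, abs_nonneg d]
  calc |d| * (w ^ 2 * s * w ^ 2) = w ^ 4 * (|d| * s) := by ring
    _ ≤ w ^ 4 * (d ^ 2 + s ^ 2) := by gcongr
    _ = (d ^ 2 * w ^ 2 + w ^ 2 * s * s) * w ^ 2 := by ring

section

variable {Ω : Type*} [MeasurableSpace Ω] {μ : Measure Ω} {X : ℕ → Ω → ℝ}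

lemma ae_summable_of_summable_integral {Y : ℕ → Ω → ℝ} (hY : ∀ k, 0 ≤ᵐ[μ] Y k)
    (hint : ∀ k, Integrable (Y k) μ) (hsum : Summable fun k => ∫ ω, Y k ω ∂μ) :
    ∀ᵐ ω ∂μ, Summable fun k => Y k ω := by
  have hmeas : ∀ k, AEMeasurable (fun ω => ENNReal.ofReal (Y k ω)) μ :=
    fun k => (hint k).aemeasurable.ennreal_ofReal
  have hfin : ∫⁻ ω, ∑' k, ENNReal.ofReal (Y k ω) ∂μ ≠ ∞ := by
    rw [lintegral_tsum hmeas,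
      ← tsum_congr fun k => ofReal_integral_eq_lintegral_ofReal (hint k) (hY k),
      ← ENNReal.ofReal_tsum_of_nonneg (fun k => integral_nonneg_of_ae (hY k)) hsum]
    exact ENNReal.ofReal_ne_top
  filter_upwards [ae_lt_top' (AEMeasurable.tsum hmeas) hfin, ae_all_iff.2 hY]
    with ω hω hY
  simpa [ENNReal.toReal_ofReal (hY _)] using ENNReal.summable_toReal hω.ne

lemma ae_eventually_half_le_sum_range (hint : Integrable (X 0) μ)
    (hindep : Pairwise fun i j => X i ⟂ᵢ[μ] X j) (hident : ∀ i, IdentDistrib (X i) (X 0) μ μ)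
    (hmean : μ[X 0] = 1) :
    ∀ᵐ ω ∂μ, ∀ᶠ k : ℕ in atTop, ((k : ℝ) + 1) / 2 ≤ ∑ i ∈ Finset.range (k + 1), X i ω := by
  filter_upwards [strong_law_ae X hint hindep hident] with ω hω
  have hhalf : (1 / 2 : ℝ) < μ[X 0] := by rw [hmean]; norm_num
  filter_upwards [(hω.comp (tendsto_add_atTop_nat 1)).eventually (eventually_ge_nhds hhalf)]
    with k hk
  have hk0 : (0 : ℝ) < k + 1 := by positivity
  simp only [Function.comp_apply, Nat.cast_add_one, smul_eq_mul, ← div_eq_inv_mul,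
    le_div_iff₀ hk0] at hk
  linarith

variable [IsProbabilityMeasure μ]

lemma integral_sum_range_sub_sq (hX : MemLp (X 0) 2 μ)
    (hindep : Pairwise fun i j => X i ⟂ᵢ[μ] X j) (hident : ∀ i, IdentDistrib (X i) (X 0) μ μ)
    (hmean : μ[X 0] = 1) (n : ℕ) :
    ∫ ω, (∑ i ∈ Finset.range n, X i ω - n) ^ 2 ∂μ = n * Var[X 0; μ] := by
  have hXi : ∀ i, MemLp (X i) 2 μ := fun i => (hident i).memLp_iff.2 hX
  have hmean_sum : μ[∑ i ∈ Finset.range n, X i] = (n : ℝ) := by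
    simp [integral_finsetSum _ fun i _ => (hXi i).integrable one_le_two, (hident _).integral_eq,
      hmean]
  have hvar := IndepFun.variance_sum (s := Finset.range n) (fun i _ => hXi i)
    fun i _ j _ hij => hindep hij
  rw [variance_eq_integral (memLp_finsetSum' _ fun i _ => hXi i).aemeasurable, hmean_sum] at hvar
  simpa [(hident _).variance_eq] using hvar

lemma ae_summable_abs_sum_range_sub_div_sq (hX : MemLp (X 0) 2 μ)
    (hindep : Pairwise fun i j => X i ⟂ᵢ[μ] X j) (hident : ∀ i, IdentDistrib (X i) (X 0) μ μ)
    (hmean : μ[X 0] = 1) :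
    ∀ᵐ ω ∂μ, Summable fun k : ℕ =>
      |∑ i ∈ Finset.range (k + 1), X i ω - (k + 1)| / ((k : ℝ) + 1) ^ 2 := by
  have hXi : ∀ i, MemLp (X i) 2 μ := fun i => (hident i).memLp_iff.2 hX
  have hζ := summable_add_one_rpow_neg (show (1 : ℝ) < 3 / 2 by norm_num)
  have hY := ae_summable_of_summable_integral (μ := μ)
    (Y := fun k ω =>
      (∑ i ∈ Finset.range (k + 1), X i ω - (k + 1)) ^ 2 / ((k : ℝ) + 1) ^ (5 / 2 : ℝ))
    (fun k => ae_of_all _ fun ω => by positivity)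
    (fun k => by
      simpa using (((memLp_finsetSum _ fun i _ => hXi i).sub
        (memLp_const ((k : ℝ) + 1))).integrable_sq).div_const _)
    ?_
  · filter_upwards [hY] with ω hω
    exact (hω.add hζ).of_nonneg_of_le (fun k => by positivity)
      fun k => abs_div_sq_le_sq_div_rpow_add_rpow (by positivity)
  refine (hζ.mul_left Var[X 0; μ]).congr fun k => ?_
  have hk : (0 : ℝ) < k + 1 := by positivity
  have := integral_sum_range_sub_sq hX hindep hident hmean (k + 1)
  push_cast at this
  rw [integral_div, this, rpow_neg hk.le, show (5 / 2 : ℝ) = 1 + 3 / 2 by norm_num,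
    rpow_add hk, rpow_one]
  field_simp

theorem ae_tendsto_tsum_rpow_neg_sum_range_sub (hX : MemLp (X 0) 2 μ)
    (hindep : Pairwise fun i j => X i ⟂ᵢ[μ] X j) (hident : ∀ i, IdentDistrib (X i) (X 0) μ μ)
    (hmean : μ[X 0] = 1) :
    ∀ᵐ ω ∂μ, Tendsto (fun β : ℝ => ∑' k, (∑ i ∈ Finset.range (k + 1), X i ω) ^ (-β) -
        ∑' k : ℕ, ((k : ℝ) + 1) ^ (-β)) (𝓝[>] 1)
      (𝓝 (∑' k, ((∑ i ∈ Finset.range (k + 1), X i ω)⁻¹ - ((k : ℝ) + 1)⁻¹))) := by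
  filter_upwards [ae_eventually_half_le_sum_range (hX.integrable one_le_two) hindep hident hmean,
    ae_summable_abs_sum_range_sub_div_sq hX hindep hident hmean] with ω hlow hdev
  exact tendsto_tsum_rpow_neg_sub_tsum_rpow_neg hlow hdev

end

/-- with `(η_k)` the points of a rate-1 Poisson point process on
`(0,∞)` in increasing order (partial sums of i.i.d. exponential(1) variables)
and `Z(β) = ∑ η_k^{-β}`, almost surely `lim_{β↓1} (Z(β) - ζ(β))` exists and is
finite; consequently `Z(β) = 1/(β-1) + W + o(1)` a.s. as `β ↓ 1` for some
random variable `W`. -/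
theorem Z_minus_zeta_converges
    {Ω : Type*} [MeasureSpace Ω] [IsProbabilityMeasure (ℙ : Measure Ω)]
    (E : ℕ → Ω → ℝ) (hmeas : ∀ i, Measurable (E i))
    (hindep : iIndepFun E ℙ)
    (hdist : ∀ i, Measure.map (E i) ℙ = expMeasure 1)
    (η : ℕ → Ω → ℝ) (hη : ∀ k ω, η k ω = ∑ i ∈ Finset.range (k + 1), E i ω)
    (Z : ℝ → Ω → ℝ) (hZ : ∀ β ω, Z β ω = ∑' k : ℕ, η k ω ^ (-β))
    :
    (∀ᵐ ω ∂ℙ, ∃ L : ℝ,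
        Tendsto (fun β : ℝ => Z β ω - ∑' n : ℕ, ((n : ℝ) + 1) ^ (-β))
          (𝓝[>] (1 : ℝ)) (𝓝 L)) ∧
    ∃ W : Ω → ℝ, ∀ᵐ ω ∂ℙ,
        Tendsto (fun β : ℝ => Z β ω - 1 / (β - 1)) (𝓝[>] (1 : ℝ)) (𝓝 (W ω)) := by
  have hident : ∀ i, IdentDistrib (E i) (E 0) ℙ ℙ :=
    fun i => ⟨(hmeas i).aemeasurable, (hmeas 0).aemeasurable, (hdist i).trans (hdist 0).symm⟩
  have hexp : IdentDistrib (E 0) id ℙ (expMeasure 1) :=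
    ⟨(hmeas 0).aemeasurable, aemeasurable_id, by rw [hdist 0, Measure.map_id]⟩
  have hmean : ℙ[E 0] = 1 := by
    simpa using hexp.integral_eq.trans (integral_id_expMeasure one_pos)
  have hZ_sub_zeta : ∀ᵐ ω ∂ℙ, ∃ L : ℝ,
      Tendsto (fun β : ℝ => Z β ω - ∑' n : ℕ, ((n : ℝ) + 1) ^ (-β)) (𝓝[>] (1 : ℝ)) (𝓝 L) := by
    filter_upwards [ae_tendsto_tsum_rpow_neg_sum_range_sub
      (hexp.memLp_iff.2 (memLp_two_id_expMeasure one_pos)) (fun i j hij => hindep.indepFun hij)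
      hident hmean] with ω hω
    exact ⟨_, by simpa only [hZ, hη] using hω⟩
  refine ⟨hZ_sub_zeta, fun ω => limUnder (𝓝[>] 1) fun β => Z β ω - 1 / (β - 1), ?_⟩
  filter_upwards [hZ_sub_zeta] with ω ⟨L, hL⟩
  exact tendsto_nhds_limUnder ⟨L + eulerMascheroniConstant,
    (hL.add tendsto_tsum_add_one_rpow_neg_sub_inv).congr fun β => by ring⟩
end

section
/- Let β' ≥ β > 1 and for r ≥ 0 set I(r) = ∫_0^∞ dx / ((1+(rx)^β)(1+x^{β'})). Then for every r ≥ 1, |I(r) - (log r)/r| ≤ 4/r + (β-1)·(log r)²/(2r). -/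
open Real Set MeasureTheory

/-!
Split `(0, ∞)` at `1/r` and `1`. The integrand is at most `1` on `(0, 1/r]` and at most
`1/(r x²)` on `(1, ∞)`, so these pieces contribute at most `1/r` each. On `[1/r, 1]`, where
`t = r x ≥ 1`, it is at most `1/t`, whose integral is `log r / r`, and
`1/t - integrand = (1/t - t^{-β}) + 1/(t^β (1 + t^β)) + x^{β'}/((1 + t^β)(1 + x^{β'}))`.
The three terms are at most `(β - 1) log t / t` (from `1 - 1/y ≤ log y`), `1/t²` and `1/r`
(as `r x^{β'} ≤ (r x)^β` for `x ≤ 1 ≤ β ≤ β'`), and this bound integrates to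
`(β - 1) (log r)² / (2r) + 2/r - 2/r²`.
-/

lemma le_one_add_rpow {y β : ℝ} (hy : 0 ≤ y) (hβ : 1 ≤ β) : y ≤ 1 + y ^ β := by
  rcases le_total y 1 with hy1 | hy1
  · linarith [rpow_nonneg hy β]
  · linarith [self_le_rpow_of_one_le hy1 hβ]

lemma inv_sub_inv_rpow_le_mul_log_div {t : ℝ} (ht : 0 < t) (β : ℝ) :
    t⁻¹ - (t ^ β)⁻¹ ≤ (β - 1) * log t / t := by
  have hsplit : t ^ β = t * t ^ (β - 1) := by
    conv_lhs => rw [show β = 1 + (β - 1) by ring, rpow_add ht, rpow_one]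
  have key := one_sub_inv_le_log_of_pos (rpow_pos_of_pos ht (β - 1))
  rw [log_rpow ht] at key
  rw [hsplit, mul_inv, le_div_iff₀ ht]
  calc (t⁻¹ - t⁻¹ * (t ^ (β - 1))⁻¹) * t = 1 - (t ^ (β - 1))⁻¹ := by field_simp
    _ ≤ (β - 1) * log t := key

namespace IntegralEstimate

noncomputable def integrand (β β' r x : ℝ) : ℝ := 1 / ((1 + (r * x) ^ β) * (1 + x ^ β'))

noncomputable def errorBound (β r x : ℝ) : ℝ :=
  (β - 1) * log (r * x) / (r * x) + 1 / (r * x) ^ 2 + 1 / r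

variable {β β' r x : ℝ}

lemma one_le_integrand_denom (hr : 0 ≤ r) (hx : 0 ≤ x) :
    1 ≤ (1 + (r * x) ^ β) * (1 + x ^ β') := by
  have := rpow_nonneg (mul_nonneg hr hx) β
  have := rpow_nonneg hx β'
  nlinarith

lemma integrand_nonneg (hr : 0 ≤ r) (hx : 0 ≤ x) : 0 ≤ integrand β β' r x :=
  one_div_nonneg.mpr (zero_le_one.trans (one_le_integrand_denom hr hx))

lemma integrand_le_one (hr : 0 ≤ r) (hx : 0 ≤ x) : integrand β β' r x ≤ 1 :=
  (div_le_one (zero_lt_one.trans_le (one_le_integrand_denom hr hx))).mpr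
    (one_le_integrand_denom hr hx)

lemma integrand_le_inv_mul (hβ : 1 ≤ β) (hr : 0 < r) (hx : 0 < x) :
    integrand β β' r x ≤ 1 / (r * x) := by
  have h1 := le_one_add_rpow (mul_pos hr hx).le hβ
  have h2 := rpow_nonneg hx.le β'
  apply one_div_le_one_div_of_le (by positivity)
  exact h1.trans (le_mul_of_one_le_right (by positivity) (by linarith))

lemma integrand_le_inv_mul_rpow_neg_two (hβ : 1 ≤ β) (hβ' : 1 ≤ β') (hr : 0 < r)
    (hx : 0 < x) :
    integrand β β' r x ≤ r⁻¹ * x ^ (-2 : ℝ) := by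
  have h1 := le_one_add_rpow (mul_pos hr hx).le hβ
  have h2 := le_one_add_rpow hx.le hβ'
  have : r⁻¹ * x ^ (-2 : ℝ) = 1 / (r * x * x) := by
    rw [rpow_neg hx.le, rpow_two]; field_simp
  rw [this]
  exact one_div_le_one_div_of_le (by positivity) (mul_le_mul h1 h2 hx.le (by positivity))

lemma inv_mul_sub_integrand_le_errorBound (hβ : 1 ≤ β) (hββ' : β ≤ β') (hx : 0 < x)
    (hx1 : x ≤ 1) (hrx : 1 ≤ r * x) :
    1 / (r * x) - integrand β β' r x ≤ errorBound β r x := by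
  have hr : 1 ≤ r := by nlinarith
  set t := r * x
  set A := t ^ β
  set S := x ^ β'
  have hS : 0 ≤ S := rpow_nonneg hx.le β'
  have htA : t ≤ A := self_le_rpow_of_one_le hrx hβ
  have hrS : r * S ≤ A := by
    have h1 : S ≤ x ^ β := rpow_le_rpow_of_exponent_ge hx hx1 hββ'
    have h2 : r ≤ r ^ β := self_le_rpow_of_one_le hr hβ
    have h3 : A = r ^ β * x ^ β := mul_rpow (by linarith) hx.le
    have h4 : 0 ≤ x ^ β := rpow_nonneg hx.le _
    rw [h3]; nlinarith
  have hA : 0 < A := by linarith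
  have hdecomp : 1 / t - integrand β β' r x =
      (t⁻¹ - A⁻¹) + 1 / (A * (1 + A)) + S / ((1 + A) * (1 + S)) := by
    change 1 / t - 1 / ((1 + A) * (1 + S)) = _
    field_simp; ring
  have hlog : t⁻¹ - A⁻¹ ≤ (β - 1) * log t / t :=
    inv_sub_inv_rpow_le_mul_log_div (by linarith) β
  have hsq : 1 / (A * (1 + A)) ≤ 1 / t ^ 2 :=
    one_div_le_one_div_of_le (by positivity) (by nlinarith)
  have hlin : S / ((1 + A) * (1 + S)) ≤ 1 / r := by
    rw [div_le_div_iff₀ (by positivity) (by linarith)]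
    nlinarith
  rw [hdecomp, errorBound]
  linarith

lemma measurable_integrand : Measurable (integrand β β' r) :=
  measurable_const.div (by fun_prop)

lemma intervalIntegrable_integrand (hr : 0 ≤ r) {a b : ℝ} (ha : 0 ≤ a) (hb : 0 ≤ b) :
    IntervalIntegrable (integrand β β' r) volume a b := by
  refine (intervalIntegrable_const (c := (1 : ℝ))).mono_fun'
    measurable_integrand.aestronglyMeasurable ?_
  filter_upwards [ae_restrict_mem measurableSet_uIoc] with x hx
  have hx0 : 0 ≤ x := (le_inf ha hb).trans hx.1.le
  rw [Real.norm_of_nonneg (integrand_nonneg hr hx0)]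
  exact integrand_le_one hr hx0

lemma integral_integrand_le (hr : 0 ≤ r) {a : ℝ} (ha : 0 ≤ a) :
    ∫ x in 0..a, integrand β β' r x ≤ a := by
  calc ∫ x in 0..a, integrand β β' r x ≤ ∫ _ in 0..a, (1 : ℝ) :=
        intervalIntegral.integral_mono_on ha (intervalIntegrable_integrand hr le_rfl ha)
          intervalIntegrable_const fun x hx => integrand_le_one hr hx.1
    _ = a := by simp

lemma integrableOn_Ioi_rpow_neg_two : IntegrableOn (fun x : ℝ => x ^ (-2 : ℝ)) (Ioi 1) :=
  integrableOn_Ioi_rpow_of_lt (by norm_num) one_pos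

lemma integrableOn_integrand_Ioi_one (hβ : 1 ≤ β) (hβ' : 1 ≤ β') (hr : 0 < r) :
    IntegrableOn (integrand β β' r) (Ioi 1) := by
  refine (integrableOn_Ioi_rpow_neg_two.const_mul r⁻¹).mono'
    measurable_integrand.aestronglyMeasurable ?_
  filter_upwards [ae_restrict_mem measurableSet_Ioi] with x hx
  have hx0 : (0 : ℝ) < x := zero_lt_one.trans hx
  rw [Real.norm_of_nonneg (integrand_nonneg hr.le hx0.le)]
  exact integrand_le_inv_mul_rpow_neg_two hβ hβ' hr hx0

lemma integral_Ioi_one_integrand_le (hβ : 1 ≤ β) (hβ' : 1 ≤ β') (hr : 0 < r) :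
    ∫ x in Ioi 1, integrand β β' r x ≤ 1 / r :=
  calc ∫ x in Ioi 1, integrand β β' r x ≤ ∫ x in Ioi (1 : ℝ), r⁻¹ * x ^ (-2 : ℝ) :=
        setIntegral_mono_on (integrableOn_integrand_Ioi_one hβ hβ' hr)
          (integrableOn_Ioi_rpow_neg_two.const_mul r⁻¹) measurableSet_Ioi fun x hx =>
            integrand_le_inv_mul_rpow_neg_two hβ hβ' hr (zero_lt_one.trans hx)
    _ = 1 / r := by
        rw [integral_const_mul, integral_Ioi_rpow_of_lt (by norm_num) one_pos]
        norm_num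

lemma continuousOn_errorBound (β : ℝ) (hr : 0 < r) : ContinuousOn (errorBound β r) (Ioi 0) := by
  show ContinuousOn (fun x => errorBound β r x) _
  simp only [errorBound]
  fun_prop (disch := intro x hx; have : 0 < x := hx; positivity)

lemma integral_errorBound (β : ℝ) (hr : 1 ≤ r) :
    ∫ x in 1 / r..1, errorBound β r x = (β - 1) * log r ^ 2 / (2 * r) + 2 / r - 2 / r ^ 2 := by
  have hr0 : 0 < r := zero_lt_one.trans_le hr
  have hpos : ∀ x ∈ uIcc (1 / r) 1, 0 < x := fun x hx =>
    (lt_inf_iff.mpr ⟨by positivity, one_pos⟩).trans_le hx.1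
  have hderiv : ∀ x ∈ uIcc (1 / r) 1, HasDerivAt
      (fun x => (β - 1) * log (r * x) ^ 2 / (2 * r) - (r ^ 2 * x)⁻¹ + x / r)
      (errorBound β r x) x := by
    intro x hx
    have hx0 := hpos x hx
    have hlog := ((hasDerivAt_id x).const_mul r).log (by positivity)
    have hinv := ((hasDerivAt_id x).const_mul (r ^ 2)).inv (by positivity)
    refine ((((hlog.pow 2).const_mul (β - 1)).div_const (2 * r)).sub hinv |>.add
      ((hasDerivAt_id x).div_const r)).congr_deriv ?_
    simp only [errorBound, id]
    field_simp
    ring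
  have hcont := (continuousOn_errorBound β hr0).mono hpos
  rw [intervalIntegral.integral_eq_sub_of_hasDerivAt hderiv hcont.intervalIntegrable]
  rw [mul_one, mul_one_div_cancel hr0.ne', log_one]
  field_simp
  ring

lemma abs_integral_integrand_sub_log_div_le (hβ : 1 ≤ β) (hββ' : β ≤ β') (hr : 1 ≤ r) :
    |(∫ x in 1 / r..1, integrand β β' r x) - log r / r| ≤
      (β - 1) * log r ^ 2 / (2 * r) + 2 / r := by
  have hr0 : 0 < r := zero_lt_one.trans_le hr
  have hle : 1 / r ≤ 1 := (div_le_one hr0).mpr hr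
  have hpos : ∀ x ∈ Icc (1 / r) 1, 0 < x := fun x hx => lt_of_lt_of_le (by positivity) hx.1
  have hsub : uIcc (1 / r) 1 ⊆ Ioi 0 := by rw [uIcc_of_le hle]; exact hpos
  have hf : IntervalIntegrable (integrand β β' r) volume (1 / r) 1 :=
    intervalIntegrable_integrand hr0.le (by positivity) zero_le_one
  have hinv : IntervalIntegrable (fun x => 1 / (r * x)) volume (1 / r) 1 :=
    ContinuousOn.intervalIntegrable
      (by fun_prop (disch := intro x hx; have : 0 < x := hsub hx; positivity))
  have hbound : IntervalIntegrable (errorBound β r) volume (1 / r) 1 :=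
    ((continuousOn_errorBound β hr0).mono hsub).intervalIntegrable
  have hlog : ∫ x in 1 / r..1, 1 / (r * x) = log r / r := by
    simp_rw [one_div, mul_inv]
    rw [intervalIntegral.integral_const_mul, integral_inv_of_pos (by positivity) one_pos]
    field_simp
  have hgap_nonneg : 0 ≤ ∫ x in 1 / r..1, (1 / (r * x) - integrand β β' r x) :=
    intervalIntegral.integral_nonneg hle fun x hx =>
      sub_nonneg.mpr (integrand_le_inv_mul hβ hr0 (hpos x hx))
  have hgap_le : ∫ x in 1 / r..1, (1 / (r * x) - integrand β β' r x) ≤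
      (β - 1) * log r ^ 2 / (2 * r) + 2 / r - 2 / r ^ 2 := by
    rw [← integral_errorBound β hr]
    refine intervalIntegral.integral_mono_on hle (hinv.sub hf) hbound fun x hx => ?_
    have hrx : 1 ≤ r * x := by linarith [(div_le_iff₀ hr0).mp hx.1]
    exact inv_mul_sub_integrand_le_errorBound hβ hββ' (hpos x hx) hx.2 hrx
  rw [intervalIntegral.integral_sub hinv hf, hlog] at hgap_nonneg hgap_le
  rw [abs_sub_comm, abs_of_nonneg hgap_nonneg]
  linarith [show 0 ≤ 2 / r ^ 2 by positivity]

end IntegralEstimate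

open IntegralEstimate

/-- for `β' ≥ β > 1`, `I(r) = ∫_0^∞ dx/((1+(rx)^β)(1+x^{β'}))`
satisfies, for every `r ≥ 1`,
`|I(r) - (log r)/r| ≤ 4/r + (β-1)(log r)²/(2r)`. -/
theorem integral_estimate_r_ge_one
    (β β' : ℝ) (hβ : 1 < β) (hββ' : β ≤ β') (r : ℝ) (hr : 1 ≤ r) :
    |(∫ x in Ioi (0 : ℝ), 1 / ((1 + (r * x) ^ β) * (1 + x ^ β')))
        - Real.log r / r|
      ≤ 4 / r + (β - 1) * (Real.log r) ^ 2 / (2 * r) := by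
  have hr0 : 0 < r := zero_lt_one.trans_le hr
  have hβ' : 1 ≤ β' := hβ.le.trans hββ'
  have hinv : 0 ≤ 1 / r := by positivity
  have hsplit : ∫ x in Ioi 0, integrand β β' r x = (∫ x in 0..1 / r, integrand β β' r x) +
      (∫ x in 1 / r..1, integrand β β' r x) + ∫ x in Ioi 1, integrand β β' r x := by
    rw [intervalIntegral.integral_add_adjacent_intervals
        (intervalIntegrable_integrand hr0.le le_rfl hinv)
        (intervalIntegrable_integrand hr0.le hinv zero_le_one),
      intervalIntegral.integral_interval_add_Ioi'
        (intervalIntegrable_integrand hr0.le le_rfl zero_le_one)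
        (integrableOn_integrand_Ioi_one hβ.le hβ' hr0)]
  have hhead_nonneg : 0 ≤ ∫ x in 0..1 / r, integrand β β' r x :=
    intervalIntegral.integral_nonneg hinv fun x hx => integrand_nonneg hr0.le hx.1
  have htail_nonneg : 0 ≤ ∫ x in Ioi 1, integrand β β' r x :=
    setIntegral_nonneg measurableSet_Ioi fun _ hx =>
      integrand_nonneg hr0.le (zero_le_one.trans hx.le)
  have hhead := integral_integrand_le (β := β) (β' := β') hr0.le hinv
  have htail := integral_Ioi_one_integrand_le hβ.le hβ' hr0
  have hmid := abs_le.mp (abs_integral_integrand_sub_log_div_le hβ.le hββ' hr)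
  change |(∫ x in Ioi 0, integrand β β' r x) - log r / r| ≤ _
  rw [hsplit, abs_le]
  constructor <;> linarith [show 4 / r = 2 * (1 / r) + 2 / r by ring]
end

section
/- Let β' ≥ β > 1 and I(r) = ∫_0^∞ dx / ((1+(rx)^β)(1+x^{β'})). Then for every r ≥ 0, I(r) ≥ (1/4)·min(1, 1/r). -/
/-!
On `(0, m]` with `m = min(1, 1/r)` both `(r x)^β` and `x^β'` are at most `1`, so the integrand is
at least `1/4` there; the integrand is nonnegative, and integrable because it is dominated by
`1/(1 + x^β')` with `β' > 1`. Hence the integral is at least `m/4`.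
-/

open Real Set MeasureTheory

lemma integrableOn_Ioi_inv_one_add_rpow {p : ℝ} (hp : 1 < p) :
    IntegrableOn (fun x : ℝ => (1 + x ^ p)⁻¹) (Ioi 0) := by
  have hmeas : Measurable (fun x : ℝ => (1 + x ^ p)⁻¹) := by fun_prop
  have hIoc : IntegrableOn (fun x : ℝ => (1 + x ^ p)⁻¹) (Ioc 0 1) := by
    refine (integrable_const (1 : ℝ)).mono' hmeas.aestronglyMeasurable.restrict ?_
    filter_upwards [ae_restrict_mem measurableSet_Ioc] with x hx
    have hxp : 0 ≤ x ^ p := rpow_nonneg hx.1.le p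
    rw [norm_inv, Real.norm_of_nonneg (by positivity)]
    exact inv_le_one_of_one_le₀ (by linarith)
  have hIoi : IntegrableOn (fun x : ℝ => (1 + x ^ p)⁻¹) (Ioi 1) := by
    refine (integrableOn_Ioi_rpow_of_lt (a := -p) (by linarith) one_pos).mono'
      hmeas.aestronglyMeasurable.restrict ?_
    filter_upwards [ae_restrict_mem measurableSet_Ioi] with x hx
    have hxp : 0 < x ^ p := rpow_pos_of_pos (one_pos.trans hx) p
    rw [norm_inv, Real.norm_of_nonneg (by positivity), rpow_neg (one_pos.trans hx).le]
    exact inv_anti₀ hxp (by linarith)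
  rw [← Ioc_union_Ioi_eq_Ioi zero_le_one]
  exact hIoc.union hIoi

lemma integrableOn_Ioi_one_div_one_add_rpow_mul_one_add_rpow (β : ℝ) {p r : ℝ} (hp : 1 < p)
    (hr : 0 ≤ r) :
    IntegrableOn (fun x : ℝ => 1 / ((1 + (r * x) ^ β) * (1 + x ^ p))) (Ioi 0) := by
  have hmeas : Measurable (fun x : ℝ => 1 / ((1 + (r * x) ^ β) * (1 + x ^ p))) := by fun_prop
  refine (integrableOn_Ioi_inv_one_add_rpow hp).mono' hmeas.aestronglyMeasurable ?_
  filter_upwards [ae_restrict_mem measurableSet_Ioi] with x hx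
  have hrx : 0 ≤ (r * x) ^ β := rpow_nonneg (mul_nonneg hr hx.le) β
  have hxp : 0 ≤ x ^ p := rpow_nonneg hx.le p
  rw [Real.norm_of_nonneg (by positivity), one_div, mul_inv]
  exact mul_le_of_le_one_left (by positivity) (inv_le_one_of_one_le₀ (by linarith))

lemma one_div_four_le_one_div_one_add_mul_one_add {a b : ℝ} (ha₀ : 0 ≤ a) (ha₁ : a ≤ 1)
    (hb₀ : 0 ≤ b) (hb₁ : b ≤ 1) : 1 / 4 ≤ 1 / ((1 + a) * (1 + b)) := by
  rw [div_le_div_iff₀ (by norm_num) (by positivity)]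
  nlinarith [mul_le_mul ha₁ hb₁ hb₀ zero_le_one]

lemma mul_sub_le_setIntegral_Ioi {f : ℝ → ℝ} {a b c : ℝ} (hab : a ≤ b)
    (hf : IntegrableOn f (Ioi a)) (hf₀ : ∀ x ∈ Ioi a, 0 ≤ f x) (hc : ∀ x ∈ Ioc a b, c ≤ f x) :
    c * (b - a) ≤ ∫ x in Ioi a, f x :=
  calc c * (b - a) = ∫ _ in Ioc a b, c := by
        rw [setIntegral_const, measureReal_def, Real.volume_Ioc,
          ENNReal.toReal_ofReal (sub_nonneg.2 hab), smul_eq_mul, mul_comm]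
    _ ≤ ∫ x in Ioc a b, f x :=
        setIntegral_mono_on (integrable_const c) (hf.mono_set Ioc_subset_Ioi_self)
          measurableSet_Ioc hc
    _ ≤ ∫ x in Ioi a, f x :=
        setIntegral_mono_set hf ((ae_restrict_iff' measurableSet_Ioi).2 (.of_forall hf₀))
          Ioc_subset_Ioi_self.eventuallyLE

lemma min_one_one_div_spec {r : ℝ} (hr : 0 ≤ r) :
    let m := if r = 0 then 1 else min 1 (1 / r)
    0 < m ∧ m ≤ 1 ∧ r * m ≤ 1 := by
  intro m
  rcases hr.eq_or_lt with rfl | hr₀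
  · simp [m]
  · simp only [m, hr₀.ne', if_false]
    refine ⟨lt_min one_pos (by positivity), min_le_left _ _, ?_⟩
    calc r * min 1 (1 / r) ≤ r * (1 / r) := mul_le_mul_of_nonneg_left (min_le_right _ _) hr
      _ = 1 := mul_one_div_cancel hr₀.ne'

/-- for `β' ≥ β > 1` and all `r ≥ 0`,
`I(r) = ∫_0^∞ dx/((1+(rx)^β)(1+x^{β'})) ≥ (1/4) min(1, 1/r)`
(for `r = 0`, `min(1,1/r)` is interpreted as `1`). -/
theorem integral_lower_bound
    (β β' : ℝ) (hβ : 1 < β) (hββ' : β ≤ β') (r : ℝ) (hr : 0 ≤ r) :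
    (1 / 4) * (if r = 0 then 1 else min 1 (1 / r))
      ≤ ∫ x in Ioi (0 : ℝ), 1 / ((1 + (r * x) ^ β) * (1 + x ^ β')) := by
  obtain ⟨hm₀, hm₁, hrm⟩ := min_one_one_div_spec hr
  set m := if r = 0 then 1 else min 1 (1 / r)
  rw [← sub_zero m]
  refine mul_sub_le_setIntegral_Ioi hm₀.le
    (integrableOn_Ioi_one_div_one_add_rpow_mul_one_add_rpow β (hβ.trans_le hββ') hr)
    (fun x hx => ?_) (fun x hx => ?_)
  · have := rpow_nonneg (mul_nonneg hr (le_of_lt hx)) β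
    have := rpow_nonneg (le_of_lt hx) β'
    positivity
  · have hrx : r * x ≤ 1 := (mul_le_mul_of_nonneg_left hx.2 hr).trans hrm
    exact one_div_four_le_one_div_one_add_mul_one_add
      (rpow_nonneg (mul_nonneg hr hx.1.le) β) (rpow_le_one (mul_nonneg hr hx.1.le) hrx (by linarith))
      (rpow_nonneg hx.1.le β') (rpow_le_one hx.1.le (hx.2.trans hm₁) (by linarith))
end

section
/- Let β' ≥ β > 1 and δ ∈ (0,1). There exists a constant C, depending only on β' and δ, such that for all r > 0, ∫_0^∞ dx/((1+(rx)^β)(1+x^{β'})) ≤ C · r^{δ-1}. -/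
open Real Set MeasureTheory

lemma aux_integrable_sf (β' δ : ℝ) (hβ' : 1 < β') (hδ0 : 0 < δ) (hδ1 : δ < 1) :
    IntegrableOn (fun x : ℝ => x ^ (δ - 1) / (1 + x ^ β')) (Ioi 0) := by
  have hmeas : Measurable fun x : ℝ => x ^ (δ - 1) / (1 + x ^ β') := by fun_prop
  have h1 : IntegrableOn (fun x : ℝ => x ^ (δ - 1) / (1 + x ^ β')) (Ioc (0:ℝ) 1) := by
    have hint : IntegrableOn (fun x : ℝ => x ^ (δ - 1)) (Ioc (0:ℝ) 1) := by
      have := intervalIntegral.intervalIntegrable_rpow' (a := (0:ℝ)) (b := 1)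
        (r := δ - 1) (by linarith)
      rwa [intervalIntegrable_iff_integrableOn_Ioc_of_le zero_le_one] at this
    refine hint.mono' hmeas.aestronglyMeasurable.restrict ?_
    filter_upwards [ae_restrict_mem measurableSet_Ioc] with x hx
    have hx0 : 0 < x := hx.1
    have hd : (1:ℝ) ≤ 1 + x ^ β' := by
      have := Real.rpow_nonneg hx0.le β'
      linarith
    rw [Real.norm_of_nonneg (by positivity)]
    calc x ^ (δ - 1) / (1 + x ^ β') ≤ x ^ (δ - 1) / 1 :=
          div_le_div_of_nonneg_left (by positivity) one_pos hd
      _ = x ^ (δ - 1) := by ring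
  have h2 : IntegrableOn (fun x : ℝ => x ^ (δ - 1) / (1 + x ^ β')) (Ioi (1:ℝ)) := by
    have hint : IntegrableOn (fun x : ℝ => x ^ (δ - 1 - β')) (Ioi (1:ℝ)) :=
      integrableOn_Ioi_rpow_of_lt (by linarith) one_pos
    refine hint.mono' hmeas.aestronglyMeasurable.restrict ?_
    filter_upwards [ae_restrict_mem measurableSet_Ioi] with x hx
    have hx0 : (0:ℝ) < x := lt_trans one_pos hx
    have hb : (0:ℝ) < x ^ β' := Real.rpow_pos_of_pos hx0 β'
    rw [Real.norm_of_nonneg (by positivity)]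
    calc x ^ (δ - 1) / (1 + x ^ β') ≤ x ^ (δ - 1) / x ^ β' :=
          div_le_div_of_nonneg_left (by positivity) hb (by linarith)
      _ = x ^ (δ - 1 - β') := (Real.rpow_sub hx0 _ _).symm
  have := h1.union h2
  rwa [Ioc_union_Ioi_eq_Ioi zero_le_one] at this

/-- pointwise bound: `1/(1+t^β) ≤ t^(δ-1)` for `t > 0`. -/
lemma aux_pointwise_sf (β δ t : ℝ) (hβ : 1 < β) (hδ0 : 0 < δ) (hδ1 : δ < 1)
    (ht : 0 < t) : 1 / (1 + t ^ β) ≤ t ^ (δ - 1) := by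
  have hA : (0:ℝ) < 1 + t ^ β := by
    have := Real.rpow_nonneg ht.le β; linarith
  have key : t ^ (1 - δ) ≤ 1 + t ^ β := by
    rcases le_or_gt t 1 with h | h
    · have : t ^ (1 - δ) ≤ 1 := Real.rpow_le_one ht.le h (by linarith)
      have := Real.rpow_nonneg ht.le β
      linarith
    · have : t ^ (1 - δ) ≤ t ^ β :=
        Real.rpow_le_rpow_of_exponent_le h.le (by linarith)
      linarith
  have h1 : 1 / (1 + t ^ β) ≤ 1 / t ^ (1 - δ) :=
    one_div_le_one_div_of_le (Real.rpow_pos_of_pos ht _) key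
  calc 1 / (1 + t ^ β) ≤ 1 / t ^ (1 - δ) := h1
    _ = t ^ (δ - 1) := by
        rw [one_div, ← Real.rpow_neg ht.le]; ring_nf

/-- for `β' > 1` and `δ ∈ (0,1)` there is a constant `C`,
depending only on `β'` and `δ`, such that for all `β` with `β' ≥ β > 1` and
all `r > 0`, `∫_0^∞ dx/((1+(rx)^β)(1+x^{β'})) ≤ C r^{δ-1}`. -/
theorem integral_upper_bound_strongly_fluctuating
    (β' δ : ℝ) (hβ' : 1 < β') (hδ : δ ∈ Ioo (0 : ℝ) 1) :
    ∃ C > 0, ∀ β : ℝ, 1 < β → β ≤ β' → ∀ r : ℝ, 0 < r →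
      (∫ x in Ioi (0 : ℝ), 1 / ((1 + (r * x) ^ β) * (1 + x ^ β')))
        ≤ C * r ^ (δ - 1) := by
  obtain ⟨hδ0, hδ1⟩ := hδ
  set I : ℝ := ∫ x in Ioi (0:ℝ), x ^ (δ - 1) / (1 + x ^ β') with hI
  have hInt := aux_integrable_sf β' δ hβ' hδ0 hδ1
  have hInonneg : 0 ≤ I := by
    apply setIntegral_nonneg measurableSet_Ioi
    intro x hx
    have hx0 : (0:ℝ) < x := hx
    have := Real.rpow_nonneg hx0.le β'
    positivity
  refine ⟨I + 1, by linarith, ?_⟩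
  intro β hβ hββ' r hr
  have step1 : (∫ x in Ioi (0:ℝ), 1 / ((1 + (r * x) ^ β) * (1 + x ^ β')))
      ≤ ∫ x in Ioi (0:ℝ), r ^ (δ - 1) * (x ^ (δ - 1) / (1 + x ^ β')) := by
    refine integral_mono_of_nonneg ?_ (hInt.const_mul _) ?_
    · filter_upwards [ae_restrict_mem measurableSet_Ioi] with x hx
      have hx0 : (0:ℝ) < x := hx
      have h1 : (0:ℝ) < 1 + (r * x) ^ β := by
        have := Real.rpow_nonneg (by positivity : (0:ℝ) ≤ r * x) β; linarith
      have h2 : (0:ℝ) < 1 + x ^ β' := by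
        have := Real.rpow_nonneg hx0.le β'; linarith
      positivity
    · filter_upwards [ae_restrict_mem measurableSet_Ioi] with x hx
      have hx0 : (0:ℝ) < x := hx
      have hrx : (0:ℝ) < r * x := by positivity
      have h2 : (0:ℝ) < 1 + x ^ β' := by
        have := Real.rpow_nonneg hx0.le β'; linarith
      have h1 : (0:ℝ) < 1 + (r * x) ^ β := by
        have := Real.rpow_nonneg hrx.le β; linarith
      have key := aux_pointwise_sf β δ (r * x) hβ hδ0 hδ1 hrx
      have : 1 / ((1 + (r * x) ^ β) * (1 + x ^ β'))
          = (1 / (1 + (r * x) ^ β)) * (1 / (1 + x ^ β')) := by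
        rw [div_mul_div_comm, one_mul]
      rw [this]
      calc (1 / (1 + (r * x) ^ β)) * (1 / (1 + x ^ β'))
          ≤ (r * x) ^ (δ - 1) * (1 / (1 + x ^ β')) := by
            apply mul_le_mul_of_nonneg_right key (by positivity)
        _ = r ^ (δ - 1) * (x ^ (δ - 1) / (1 + x ^ β')) := by
            rw [Real.mul_rpow hr.le hx0.le]; ring
  have step2 : (∫ x in Ioi (0:ℝ), r ^ (δ - 1) * (x ^ (δ - 1) / (1 + x ^ β')))
      = r ^ (δ - 1) * I := by
    rw [hI, integral_const_mul]
  have hrpow : (0:ℝ) < r ^ (δ - 1) := Real.rpow_pos_of_pos hr _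
  calc (∫ x in Ioi (0:ℝ), 1 / ((1 + (r * x) ^ β) * (1 + x ^ β')))
      ≤ r ^ (δ - 1) * I := by rw [← step2]; exact step1
    _ ≤ (I + 1) * r ^ (δ - 1) := by nlinarith
end

section
/- Define κ(β) := (1/2)·( 1/(β²-1) + (6/(π²β³(β+1)))·( Γ''(x)/Γ(x) - (Γ'(x)/Γ(x))² ) - β²/(β²-1)² ) where x = (β-1)/β. Then κ(β) ~ (3/(2π²) - 1/8)·(β-1)^{-2} as β ↓ 1, and κ(β) ~ (6ζ(3)/π² - 1/2)·β^{-5} as β → ∞. -/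
/-!
`Γ''/Γ - (Γ'/Γ)²` is `(log Γ)''`. Differentiating Gauss's limit
`log Γ(x) = lim_n (x log n + log n! - ∑_{m ≤ n} log (x + m))` termwise twice shows that it equals
`ψ'(x) = ∑_{k ≥ 0} (k + x)⁻²`. As `β ↓ 1`, `x = (β - 1)/β → 0` and the pole in
`ψ'(x) = x⁻² + ψ'(x + 1)` gives the `(β - 1)⁻²` behaviour. As `β → ∞`, `x = 1 - β⁻¹ → 1`;
since `ψ'(1) = ζ(2) = π²/6` the terms of order `β⁻⁴` cancel, and the `β⁻⁵` term is
`-ψ''(1) = 2ζ(3)`.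
-/

open Real Filter Set Topology

lemma summable_one_div_nat_add_pow (a : ℝ) {p : ℕ} (hp : 2 ≤ p) :
    Summable fun n : ℕ => 1 / ((n : ℝ) + a) ^ p := by
  refine Summable.of_norm ?_
  have := (Real.summable_one_div_nat_add_rpow a p).2 (by exact_mod_cast hp)
  simpa [Real.rpow_natCast, abs_pow] using this

lemma hasDerivAt_one_div_add_sq (a x : ℝ) (hx : a + x ≠ 0) :
    HasDerivAt (fun y => 1 / (a + y) ^ 2) (-2 / (a + x) ^ 3) x :=
  ((hasDerivAt_const x (1 : ℝ)).fun_div (((hasDerivAt_id' x).const_add a).fun_pow 2)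
    (pow_ne_zero 2 hx)).congr_deriv (by field_simp; ring)

lemma norm_one_div_sub_one_div_add_le {a x : ℝ} (ha : 0 < a) (hx : 0 ≤ x) :
    ‖1 / a - 1 / (a + x)‖ ≤ x * (1 / a ^ 2) := by
  have h : 1 / a - 1 / (a + x) = x / (a * (a + x)) := by field_simp; ring
  rw [h, Real.norm_of_nonneg (by positivity), ← div_eq_mul_one_div, sq]
  gcongr
  linarith

lemma differentiableAt_Gamma_of_pos {x : ℝ} (hx : 0 < x) : DifferentiableAt ℝ Gamma x :=
  differentiableAt_Gamma fun m hm => by linarith [m.cast_nonneg (α := ℝ)]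

noncomputable def trigammaSeries (x : ℝ) : ℝ := ∑' k : ℕ, 1 / ((k : ℝ) + x) ^ 2

lemma trigammaSeries_eq_add_one (x : ℝ) :
    trigammaSeries x = 1 / x ^ 2 + trigammaSeries (x + 1) := by
  rw [trigammaSeries, (summable_one_div_nat_add_pow x le_rfl).tsum_eq_zero_add, trigammaSeries]
  push_cast
  simp only [zero_add, add_assoc, add_comm 1 x]

lemma trigammaSeries_one : trigammaSeries 1 = π ^ 2 / 6 := by
  have h := (hasSum_nat_add_iff (f := fun n : ℕ => 1 / (n : ℝ) ^ 2) 1).2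
    (by simpa using hasSum_zeta_two)
  simpa [trigammaSeries] using h.tsum_eq

lemma hasDerivAt_trigammaSeries {x : ℝ} (hx : 0 < x) :
    HasDerivAt trigammaSeries (-2 * ∑' k : ℕ, 1 / ((k : ℝ) + x) ^ 3) x := by
  have hpos : ∀ (k : ℕ) {y : ℝ}, x / 2 ≤ y → 0 < (k : ℝ) + y := fun k y hy =>
    add_pos_of_nonneg_of_pos k.cast_nonneg (by linarith)
  rw [← tsum_mul_left]
  refine hasDerivAt_tsum_of_isPreconnected (g := fun (k : ℕ) y => 1 / ((k : ℝ) + y) ^ 2)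
    ((summable_one_div_nat_add_pow (x / 2) (by norm_num : 2 ≤ 3)).mul_left 2) isOpen_Ioi
    isPreconnected_Ioi
    (fun k y hy => (hasDerivAt_one_div_add_sq k y (hpos k hy.le).ne').congr_deriv
      (div_eq_mul_one_div _ _))
    (fun k y hy => ?_) (mem_Ioi.2 (half_lt_self hx))
    (summable_one_div_nat_add_pow x le_rfl) (mem_Ioi.2 (half_lt_self hx))
  rw [norm_mul, norm_neg, Real.norm_ofNat,
    Real.norm_of_nonneg (one_div_nonneg.2 (pow_nonneg (hpos k hy.le).le 3))]
  gcongr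
  exact (mem_Ioi.1 hy).le

noncomputable def digammaSeries (x : ℝ) : ℝ :=
  -eulerMascheroniConstant - 1 / x + ∑' k : ℕ, (1 / ((k : ℝ) + 1) - 1 / ((k : ℝ) + 1 + x))

noncomputable def digammaSeq (n : ℕ) (x : ℝ) : ℝ :=
  log n - harmonic n - 1 / x + ∑ k ∈ Finset.range n, (1 / ((k : ℝ) + 1) - 1 / ((k : ℝ) + 1 + x))

lemma hasDerivAt_logGammaSeq {x : ℝ} (hx : 0 < x) (n : ℕ) :
    HasDerivAt (fun y => BohrMollerup.logGammaSeq y n) (digammaSeq n x) x := by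
  have hlog : ∀ m ∈ Finset.range (n + 1),
      HasDerivAt (fun y => log (y + m)) (1 / (x + m)) x := fun m _ => by
    simpa [one_div] using ((hasDerivAt_id' x).add_const (m : ℝ)).log (by positivity)
  refine ((((hasDerivAt_id' x).mul_const (log n)).add_const _).sub
    (HasDerivAt.fun_sum hlog)).congr_deriv ?_
  rw [digammaSeq, Finset.sum_range_succ', Finset.sum_sub_distrib, harmonic]
  push_cast
  simp only [one_div, add_zero]
  ring_nf

lemma tendstoUniformlyOn_digammaSeq (b : ℝ) :
    TendstoUniformlyOn digammaSeq digammaSeries atTop (Ioo 0 b) := by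
  have hconst : TendstoUniformlyOn (fun (n : ℕ) (_ : ℝ) => log n - harmonic n)
      (fun _ => -eulerMascheroniConstant) atTop (Ioo 0 b) := by
    refine Tendsto.tendstoUniformlyOn_const ?_ _
    simpa using tendsto_harmonic_sub_log.neg
  have hpole :
      TendstoUniformlyOn (fun (_ : ℕ) (x : ℝ) => 1 / x) (fun x => 1 / x) atTop (Ioo 0 b) :=
    fun _ hu => Eventually.of_forall fun _ _ _ => refl_mem_uniformity hu
  have hseries := tendstoUniformlyOn_tsum_nat
    (f := fun k x => 1 / ((k : ℝ) + 1) - 1 / ((k : ℝ) + 1 + x))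
    ((summable_one_div_nat_add_pow 1 le_rfl).mul_left b) (s := Ioo 0 b) fun k x hx =>
      (norm_one_div_sub_one_div_add_le (by positivity) hx.1.le).trans
        (by gcongr; exact hx.2.le)
  exact (hconst.sub hpole).add hseries

lemma hasDerivAt_log_Gamma {x : ℝ} (hx : 0 < x) :
    HasDerivAt (fun y => log (Gamma y)) (digammaSeries x) x :=
  hasDerivAt_of_tendstoUniformlyOn (f := fun n y => BohrMollerup.logGammaSeq y n) isOpen_Ioo
    (tendstoUniformlyOn_digammaSeq (x + 1))
    (Eventually.of_forall fun n _ hy => hasDerivAt_logGammaSeq hy.1 n)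
    (fun _ hy => BohrMollerup.tendsto_log_gamma hy.1) ⟨hx, lt_add_one x⟩

lemma hasDerivAt_digammaSeries {x : ℝ} (hx : 0 < x) :
    HasDerivAt digammaSeries (trigammaSeries x) x := by
  have hterm : ∀ (k : ℕ) (y : ℝ), y ∈ Ioi (0 : ℝ) →
      HasDerivAt (fun z => 1 / ((k : ℝ) + 1) - 1 / ((k : ℝ) + 1 + z))
        (1 / ((k : ℝ) + 1 + y) ^ 2) y := fun k y hy => by
    have hy : (k : ℝ) + 1 + y ≠ 0 := by have := mem_Ioi.1 hy; positivity
    exact (((hasDerivAt_const y (1 : ℝ)).fun_div ((hasDerivAt_id' y).const_add ((k : ℝ) + 1))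
      hy).const_sub (1 / ((k : ℝ) + 1))).congr_deriv (by field_simp; ring)
  have hbound : ∀ (k : ℕ) (y : ℝ), y ∈ Ioi (0 : ℝ) →
      ‖1 / ((k : ℝ) + 1 + y) ^ 2‖ ≤ 1 / ((k : ℝ) + 1) ^ 2 := fun k y hy => by
    have := mem_Ioi.1 hy
    rw [Real.norm_of_nonneg (by positivity)]
    exact one_div_le_one_div_of_le (by positivity)
      (pow_le_pow_left₀ (by positivity) (by linarith) 2)
  have hsum := hasDerivAt_tsum_of_isPreconnected (summable_one_div_nat_add_pow 1 le_rfl)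
    isOpen_Ioi isPreconnected_Ioi hterm hbound hx
    (Summable.of_norm_bounded ((summable_one_div_nat_add_pow 1 le_rfl).mul_left x)
      fun k => norm_one_div_sub_one_div_add_le (by positivity) hx.le) hx
  have hpole : HasDerivAt (fun y : ℝ => 1 / y) (-1 / x ^ 2) x := by
    simpa [one_div, neg_div] using hasDerivAt_inv hx.ne'
  refine (((hasDerivAt_const x _).sub hpole).add hsum).congr_deriv ?_
  rw [trigammaSeries_eq_add_one, trigammaSeries]
  simp only [add_assoc, add_comm 1 x]
  ring

lemma deriv_Gamma_eq_mul_digammaSeries {x : ℝ} (hx : 0 < x) :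
    deriv Gamma x = Gamma x * digammaSeries x := by
  have hΓ := (Gamma_pos_of_pos hx).ne'
  have h := ((differentiableAt_Gamma_of_pos hx).hasDerivAt.log hΓ).unique
    (hasDerivAt_log_Gamma hx)
  rw [← h]
  field_simp

lemma deriv_deriv_Gamma_div_sub_sq {x : ℝ} (hx : 0 < x) :
    deriv (deriv Gamma) x / Gamma x - (deriv Gamma x / Gamma x) ^ 2 = trigammaSeries x := by
  have hΓ := (Gamma_pos_of_pos hx).ne'
  have hderiv : deriv Gamma =ᶠ[𝓝 x] fun y => Gamma y * digammaSeries y :=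
    eventually_of_mem (Ioi_mem_nhds hx) fun y hy => deriv_Gamma_eq_mul_digammaSeries hy
  have hΓ' : HasDerivAt Gamma (Gamma x * digammaSeries x) x := by
    rw [← deriv_Gamma_eq_mul_digammaSeries hx]
    exact (differentiableAt_Gamma_of_pos hx).hasDerivAt
  rw [hderiv.deriv_eq, (hΓ'.fun_mul (hasDerivAt_digammaSeries hx)).deriv,
    deriv_Gamma_eq_mul_digammaSeries hx]
  field_simp
  ring

noncomputable def susceptibility (β : ℝ) : ℝ :=
  (1 / 2) * (1 / (β ^ 2 - 1) + (6 / (π ^ 2 * β ^ 3 * (β + 1))) * trigammaSeries ((β - 1) / β)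
    - β ^ 2 / (β ^ 2 - 1) ^ 2)

lemma tendsto_susceptibility_mul_sq_nhdsGT_one :
    Tendsto (fun β => susceptibility β * (β - 1) ^ 2) (𝓝[>] 1)
      (𝓝 (3 / (2 * π ^ 2) - 1 / 8)) := by
  set F : ℝ → ℝ := fun β => (1 / 2) * ((β - 1) / (β + 1)) + 3 / (π ^ 2 * β * (β + 1))
      + 3 * (β - 1) ^ 2 / (π ^ 2 * β ^ 3 * (β + 1)) * trigammaSeries ((β - 1) / β + 1)
      - (1 / 2) * (β ^ 2 / (β + 1) ^ 2) with hF
  have hT : ContinuousAt (fun β : ℝ => trigammaSeries ((β - 1) / β + 1)) 1 := by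
    refine ContinuousAt.comp_of_eq (hasDerivAt_trigammaSeries one_pos).continuousAt
      (by fun_prop (disch := norm_num)) (by norm_num)
  have hcont : ContinuousAt F 1 := by
    fun_prop (disch := positivity)
  have hF1 : F 1 = 3 / (2 * π ^ 2) - 1 / 8 := by simp only [hF]; ring
  rw [← hF1]
  refine (hcont.tendsto.mono_left nhdsWithin_le_nhds).congr' ?_
  filter_upwards [self_mem_nhdsWithin] with β (hβ : 1 < β)
  have hβ1 : β - 1 ≠ 0 := sub_ne_zero.2 hβ.ne'
  have hβ2 : β ^ 2 - 1 ≠ 0 := by nlinarith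
  simp only [hF, susceptibility]
  rw [trigammaSeries_eq_add_one ((β - 1) / β)]
  generalize trigammaSeries ((β - 1) / β + 1) = T
  field_simp
  ring

lemma tendsto_susceptibility_mul_pow_five_atTop :
    Tendsto (fun β => susceptibility β * β ^ 5) atTop
      (𝓝 (6 * (∑' n : ℕ, 1 / ((n : ℝ) + 1) ^ 3) / π ^ 2 - 1 / 2)) := by
  set ζ3 := ∑' n : ℕ, 1 / ((n : ℝ) + 1) ^ 3
  have hslope : Tendsto (fun t => (trigammaSeries (1 - t) - trigammaSeries 1) / t) (𝓝[>] 0)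
      (𝓝 (2 * ζ3)) := by
    have h := HasDerivAt.comp_const_sub (1 : ℝ) 0
      (by rw [sub_zero]; exact hasDerivAt_trigammaSeries one_pos)
    rw [hasDerivAt_iff_tendsto_slope, neg_mul, neg_neg] at h
    convert h.mono_left (nhdsGT_le_nhdsNE 0) using 1
    ext t
    simp only [slope_def_field, sub_zero]
  set G : ℝ → ℝ := fun t => (1 / 2) * (-(1 + t - t ^ 2) / ((1 - t) ^ 2 * (1 + t) ^ 2))
    + 3 / (π ^ 2 * (1 + t)) * ((trigammaSeries (1 - t) - trigammaSeries 1) / t) with hG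
  have hGlim : Tendsto G (𝓝[>] 0) (𝓝 (6 * ζ3 / π ^ 2 - 1 / 2)) := by
    have hR : ContinuousAt
        (fun t : ℝ => (1 / 2) * (-(1 + t - t ^ 2) / ((1 - t) ^ 2 * (1 + t) ^ 2))) 0 := by
      fun_prop (disch := norm_num)
    have hC : ContinuousAt (fun t : ℝ => 3 / (π ^ 2 * (1 + t))) 0 := by
      fun_prop (disch := simp [pi_ne_zero])
    convert (hR.tendsto.mono_left nhdsWithin_le_nhds).add
      ((hC.tendsto.mono_left nhdsWithin_le_nhds).mul hslope) using 2
    ring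
  refine (hGlim.comp tendsto_inv_atTop_nhdsGT_zero).congr' ?_
  filter_upwards [eventually_gt_atTop 1] with β hβ
  have hβ1 : β - 1 ≠ 0 := sub_ne_zero.2 hβ.ne'
  have hβ2 : β ^ 2 - 1 ≠ 0 := by nlinarith
  have hx : (β - 1) / β = 1 - β⁻¹ := by field_simp
  simp only [Function.comp_apply, hG, susceptibility, hx, trigammaSeries_one]
  generalize trigammaSeries (1 - β⁻¹) = T
  field_simp
  ring

/-- with
`κ(β) = (1/2)(1/(β²-1) + (6/(π²β³(β+1)))(Γ''(x)/Γ(x) - (Γ'(x)/Γ(x))²) - β²/(β²-1)²)`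
where `x = (β-1)/β`, one has `κ(β) ~ (3/(2π²) - 1/8)(β-1)^{-2}` as `β ↓ 1`
and `κ(β) ~ (6ζ(3)/π² - 1/2) β^{-5}` as `β → ∞`. -/
theorem susceptibility_asymptotics
    (κ : ℝ → ℝ)
    (hκ : ∀ β : ℝ, κ β =
      (1 / 2) * (1 / (β ^ 2 - 1)
        + (6 / (π ^ 2 * β ^ 3 * (β + 1)))
          * (deriv (deriv Real.Gamma) ((β - 1) / β) / Real.Gamma ((β - 1) / β)
            - (deriv Real.Gamma ((β - 1) / β) / Real.Gamma ((β - 1) / β)) ^ 2)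
        - β ^ 2 / (β ^ 2 - 1) ^ 2)) :
    Tendsto (fun β : ℝ => κ β * (β - 1) ^ 2) (𝓝[>] (1 : ℝ))
        (𝓝 (3 / (2 * π ^ 2) - 1 / 8)) ∧
    Tendsto (fun β : ℝ => κ β * β ^ 5) atTop
        (𝓝 (6 * (∑' n : ℕ, 1 / ((n : ℝ) + 1) ^ 3) / π ^ 2 - 1 / 2)) := by
  have hκ_eq : ∀ β : ℝ, 1 < β → κ β = susceptibility β := fun β hβ => by
    rw [hκ, susceptibility, deriv_deriv_Gamma_div_sub_sq (div_pos (by linarith) (by linarith))]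
  refine ⟨tendsto_susceptibility_mul_sq_nhdsGT_one.congr' ?_,
    tendsto_susceptibility_mul_pow_five_atTop.congr' ?_⟩
  · filter_upwards [self_mem_nhdsWithin] with β hβ
    rw [hκ_eq β hβ]
  · filter_upwards [eventually_gt_atTop 1] with β hβ
    rw [hκ_eq β hβ]
end
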